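/- If φ ∈ C¹([0,∞)) with φ'(0) = 0 and B is symmetric, continuous on [0,∞)²∖{(0,0)}, supported in Γ and bounded by C* e^{(x+y)/2}/(x+y) on Γ, then the function k_φ(x,y) = B(x,y)/(xy)·(e^{−x}−e^{−y})(φ(x)−φ(y)) extends continuously to [0,∞)² with k_φ(0,0)=0. -/

import Mathlib

open Real Set Topology Filter

/-!
Away from the origin the kernel is harmless. Where both coordinates are positive it is a product
of continuous functions. At a point of an axis other than the origin, `Γ` misses a whole
neighbourhood: the cone part because `θ > 0`, the part near the origin because
`(x - y)² ≤ ρ² x y (x + y)` fails there. So the kernel vanishes nearby.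

Near the origin only `Γ₂` matters. There `|e^{-x} - e^{-y}| ≤ |x - y|`, and
`φ x - φ y = o(x - y)` by strict differentiability at `0` with `φ'(0) = 0`. Together with
`(x - y)² ≤ ρ² x y (x + y)` and the bound on `B`, this gives
`|k_φ(x, y)| ≤ C* ρ² e^{(x+y)/2} · o(1)`.
-/

/-- The support region `Γ = Γ₁ ∪ Γ₂` of the truncated kernel. -/
def Gamma (θ δ ρ : ℝ) : Set (ℝ × ℝ) :=
  {p : ℝ × ℝ |
    (p.1 ∈ Set.Ici (0:ℝ) ∧ p.2 ∈ Set.Ici (0:ℝ) ∧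
      ¬ (p.1 ∈ Set.Icc (0:ℝ) δ ∧ p.2 ∈ Set.Icc (0:ℝ) δ) ∧
      θ * p.1 ≤ p.2 ∧ p.2 ≤ θ⁻¹ * p.1) ∨
    (p.1 ∈ Set.Icc (0:ℝ) δ ∧ p.2 ∈ Set.Icc (0:ℝ) δ ∧
      |p.1 - p.2| ≤ ρ * Real.sqrt (p.1 * p.2 * (p.1 + p.2)))}

lemma abs_exp_neg_sub_exp_neg_le {a b : ℝ} (ha : 0 ≤ a) (hb : 0 ≤ b) :
    |exp (-a) - exp (-b)| ≤ |a - b| := by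
  wlog hab : a ≤ b generalizing a b
  · rw [abs_sub_comm, abs_sub_comm a]; exact this hb ha (le_of_not_ge hab)
  have hexp : exp (-b) = exp (-a) * exp (-(b - a)) := by rw [← exp_add]; ring_nf
  have h1 : 1 - (b - a) ≤ exp (-(b - a)) := by linarith [add_one_le_exp (-(b - a))]
  have h2 : exp (-a) ≤ 1 := exp_le_one_iff.2 (by linarith)
  rw [abs_of_nonneg (by rw [sub_nonneg]; exact exp_le_exp.2 (by linarith)),
    abs_of_nonpos (by linarith), hexp]
  nlinarith [exp_pos (-a)]

lemma sq_sub_le_of_mem_Gamma {θ δ ρ : ℝ} {p : ℝ × ℝ} (hp : p ∈ Gamma θ δ ρ)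
    (h₁ : p.1 ≤ δ) (h₂ : p.2 ≤ δ) :
    (p.1 - p.2) ^ 2 ≤ ρ ^ 2 * (p.1 * p.2 * (p.1 + p.2)) := by
  obtain ⟨hx, hy, hbox, -⟩ | ⟨hx, hy, hp⟩ := hp
  · exact absurd ⟨⟨hx, h₁⟩, hy, h₂⟩ hbox
  have hnn : 0 ≤ p.1 * p.2 * (p.1 + p.2) := by
    have := hx.1; have := hy.1; positivity
  calc (p.1 - p.2) ^ 2 = |p.1 - p.2| ^ 2 := (sq_abs _).symm
    _ ≤ (ρ * √(p.1 * p.2 * (p.1 + p.2))) ^ 2 := pow_le_pow_left₀ (abs_nonneg _) hp 2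
    _ = ρ ^ 2 * (p.1 * p.2 * (p.1 + p.2)) := by rw [mul_pow, sq_sqrt hnn]

lemma Gamma_subset {θ δ ρ : ℝ} (hθ : 0 < θ) :
    Gamma θ δ ρ ⊆ {p | θ * p.2 ≤ p.1 ∧ θ * p.1 ≤ p.2} ∪
      {p | (p.1 - p.2) ^ 2 ≤ ρ ^ 2 * (p.1 * p.2 * (p.1 + p.2))} := by
  intro p hp
  obtain ⟨-, -, -, hlow, hup⟩ | ⟨hx, hy, -⟩ := id hp
  · left
    refine ⟨?_, hlow⟩
    calc θ * p.2 ≤ θ * (θ⁻¹ * p.1) := by gcongr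
      _ = p.1 := by field_simp
  · exact Or.inr (sq_sub_le_of_mem_Gamma hp hx.2 hy.2)

lemma eventually_notMem_Gamma {θ δ ρ a b : ℝ} (hθ : 0 < θ) (hab : a * b = 0)
    (hne : a ≠ 0 ∨ b ≠ 0) : ∀ᶠ p in 𝓝 (a, b), p ∉ Gamma θ δ ρ := by
  have hcone : ∀ᶠ p : ℝ × ℝ in 𝓝 (a, b), p.1 < θ * p.2 ∨ p.2 < θ * p.1 := by
    have hfst : ContinuousAt (fun p : ℝ × ℝ => p.1) (a, b) := continuousAt_fst
    have hsnd : ContinuousAt (fun p : ℝ × ℝ => p.2) (a, b) := continuousAt_snd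
    rcases mul_eq_zero.1 hab with rfl | rfl <;>
      simp only [ne_eq, not_true, false_or, or_false] at hne
    · rcases lt_or_gt_of_ne hne with hneg | hpos
      · exact (hsnd.eventually_lt (hfst.const_mul θ) (by simpa using hneg))
          |>.mono fun _ => Or.inr
      · exact (hfst.eventually_lt (hsnd.const_mul θ) (by simp only; positivity))
          |>.mono fun _ => Or.inl
    · rcases lt_or_gt_of_ne hne with hneg | hpos
      · exact (hfst.eventually_lt (hsnd.const_mul θ) (by simpa using hneg))
          |>.mono fun _ => Or.inl
      · exact (hsnd.eventually_lt (hfst.const_mul θ) (by simp only; positivity))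
          |>.mono fun _ => Or.inr
  have hdiag : ∀ᶠ p : ℝ × ℝ in 𝓝 (a, b),
      ρ ^ 2 * (p.1 * p.2 * (p.1 + p.2)) < (p.1 - p.2) ^ 2 := by
    refine ContinuousAt.eventually_lt (by fun_prop) (by fun_prop) ?_
    have : a - b ≠ 0 := by
      rcases mul_eq_zero.1 hab with rfl | rfl <;> simpa using hne
    simp only [hab, zero_mul, mul_zero]
    positivity
  filter_upwards [hcone, hdiag] with p hcone hdiag hp
  rcases Gamma_subset hθ hp with ⟨h₁, h₂⟩ | h
  · rcases hcone with h | h <;> linarith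
  · exact (not_le.2 hdiag) h

-- `k_φ`; it vanishes where `x y = 0`, since division by zero gives `0`.
noncomputable def kernel (B : ℝ → ℝ → ℝ) (φ : ℝ → ℝ) (p : ℝ × ℝ) : ℝ :=
  B p.1 p.2 / (p.1 * p.2) * (exp (-p.1) - exp (-p.2)) * (φ p.1 - φ p.2)

section kernel

variable {B : ℝ → ℝ → ℝ} {φ : ℝ → ℝ}

lemma kernel_eq_zero_of_notMem {G : Set (ℝ × ℝ)} (hBsupp : ∀ x y, B x y ≠ 0 → (x, y) ∈ G)
    {p : ℝ × ℝ} (hp : p ∉ G) : kernel B φ p = 0 := by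
  have : B p.1 p.2 = 0 := not_imp_comm.1 (hBsupp p.1 p.2) hp
  simp [kernel, this]

lemma abs_kernel_le {C ρ ε x y : ℝ} (hx : 0 < x) (hy : 0 < y) (hε : 0 ≤ ε)
    (hB₀ : 0 ≤ B x y) (hB : B x y ≤ C * exp ((x + y) / 2) / (x + y))
    (hxy : (x - y) ^ 2 ≤ ρ ^ 2 * (x * y * (x + y))) (hφ : |φ x - φ y| ≤ ε * |x - y|) :
    |kernel B φ (x, y)| ≤ C * ρ ^ 2 * exp ((x + y) / 2) * ε := by
  have hxy₀ : 0 < x * y := mul_pos hx hy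
  have hBC : 0 ≤ C * exp ((x + y) / 2) / (x + y) := hB₀.trans hB
  calc |kernel B φ (x, y)|
      = B x y / (x * y) * |exp (-x) - exp (-y)| * |φ x - φ y| := by
        rw [kernel, abs_mul, abs_mul, abs_of_nonneg (by positivity)]
    _ ≤ B x y / (x * y) * |x - y| * (ε * |x - y|) := by
        gcongr ?_ * ?_
        exact mul_le_mul_of_nonneg_left (abs_exp_neg_sub_exp_neg_le hx.le hy.le) (by positivity)
    _ = ε * (B x y * (x - y) ^ 2) / (x * y) := by rw [← sq_abs (x - y)]; ring
    _ ≤ ε * (C * exp ((x + y) / 2) / (x + y) * (ρ ^ 2 * (x * y * (x + y)))) / (x * y) := by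
        gcongr
    _ = C * ρ ^ 2 * exp ((x + y) / 2) * ε := by field_simp

lemma continuousAt_kernel_of_mul_eq_zero {θ δ ρ a b : ℝ} (hθ : 0 < θ)
    (hBsupp : ∀ x y, B x y ≠ 0 → (x, y) ∈ Gamma θ δ ρ) (hab : a * b = 0) (hne : a ≠ 0 ∨ b ≠ 0) :
    ContinuousAt (kernel B φ) (a, b) :=
  continuousAt_const.congr <| (eventually_notMem_Gamma hθ hab hne).mono fun _ hp =>
    (kernel_eq_zero_of_notMem hBsupp hp).symm

lemma continuousWithinAt_kernel_of_pos {s : Set (ℝ × ℝ)} {a b : ℝ} (ha : 0 < a) (hb : 0 < b)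
    (hB : ContinuousWithinAt (fun p : ℝ × ℝ => B p.1 p.2) s (a, b)) (hφ : Continuous φ) :
    ContinuousWithinAt (kernel B φ) s (a, b) := by
  unfold kernel
  exact ((hB.div (by fun_prop) (mul_pos ha hb).ne').mul (by fun_prop)).mul (by fun_prop)

lemma isLittleO_sub_of_deriv_eq_zero (hφ : ContDiff ℝ 1 φ) (hφ0 : deriv φ 0 = 0) :
    (fun p : ℝ × ℝ => φ p.1 - φ p.2) =o[𝓝 (0, 0)] fun p => p.1 - p.2 := by
  have := ((hφ.contDiffAt (x := 0)).hasStrictDerivAt one_ne_zero).hasStrictFDerivAt.isLittleO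
  simpa [hφ0] using this

lemma continuousWithinAt_kernel_zero {θ δ ρ C : ℝ} (hδ : 0 < δ) (hC : 0 < C)
    (hBnn : ∀ x y, 0 ≤ B x y) (hBsupp : ∀ x y, B x y ≠ 0 → (x, y) ∈ Gamma θ δ ρ)
    (hBbound : ∀ x y, (x, y) ∈ Gamma θ δ ρ → B x y ≤ C * exp ((x + y) / 2) / (x + y))
    (hφ : ContDiff ℝ 1 φ) (hφ0 : deriv φ 0 = 0) :
    ContinuousWithinAt (kernel B φ) (Ici 0 ×ˢ Ici 0) (0, 0) := by
  rw [ContinuousWithinAt, show kernel B φ (0, 0) = 0 by simp [kernel], Metric.tendsto_nhds]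
  intro ε hε
  set c := ε / (2 * (C * ρ ^ 2 + 1))
  have hc : 0 < c := by positivity
  have hnear : ∀ᶠ p : ℝ × ℝ in 𝓝 (0, 0), p.1 < δ ∧ p.2 < δ ∧ exp ((p.1 + p.2) / 2) < 2 := by
    refine (continuousAt_fst.eventually_lt continuousAt_const hδ).and
      ((continuousAt_snd.eventually_lt continuousAt_const hδ).and
        (ContinuousAt.eventually_lt (by fun_prop) continuousAt_const ?_))
    norm_num
  filter_upwards [nhdsWithin_le_nhds ((isLittleO_sub_of_deriv_eq_zero hφ hφ0).bound hc),
    nhdsWithin_le_nhds hnear, self_mem_nhdsWithin] with p hφp ⟨hδ₁, hδ₂, hexp⟩ ⟨hx, hy⟩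
  obtain ⟨x, y⟩ := p
  rw [Real.dist_eq, sub_zero]
  by_cases hΓ : (x, y) ∈ Gamma θ δ ρ
  swap
  · rwa [kernel_eq_zero_of_notMem hBsupp hΓ, abs_zero]
  rcases (mem_Ici.1 hx).eq_or_lt with rfl | hx
  · simpa [kernel] using hε
  rcases (mem_Ici.1 hy).eq_or_lt with rfl | hy
  · simpa [kernel] using hε
  calc |kernel B φ (x, y)| ≤ C * ρ ^ 2 * exp ((x + y) / 2) * c :=
        abs_kernel_le hx hy hc.le (hBnn x y) (hBbound x y hΓ)
          (sq_sub_le_of_mem_Gamma hΓ hδ₁.le hδ₂.le) hφp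
    _ ≤ C * ρ ^ 2 * 2 * c := by gcongr
    _ < ε := by
        rw [mul_div_assoc', div_lt_iff₀ (by positivity)]
        nlinarith [mul_nonneg hC.le (sq_nonneg ρ)]

end kernel

theorem stmt6 (θ δ ρ Cstar : ℝ) (hθ : θ ∈ Set.Ioo (0:ℝ) 1) (hδ : 0 < δ)
    (hC : 0 < Cstar)
    (B : ℝ → ℝ → ℝ) (hBnn : ∀ x y, 0 ≤ B x y)
    (hBcont : ContinuousOn (fun p : ℝ × ℝ => B p.1 p.2)
      ((Set.Ici (0:ℝ) ×ˢ Set.Ici (0:ℝ)) \ {((0:ℝ), (0:ℝ))}))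
    (hBsupp : ∀ x y, B x y ≠ 0 → (x, y) ∈ Gamma θ δ ρ)
    (hBbound : ∀ x y, (x, y) ∈ Gamma θ δ ρ → B x y ≤ Cstar * Real.exp ((x + y)/2) / (x + y))
    (φ : ℝ → ℝ) (hφ : ContDiff ℝ 1 φ) (hφ0 : deriv φ 0 = 0) :
    ContinuousOn
      (fun p : ℝ × ℝ =>
        B p.1 p.2 / (p.1 * p.2) * (Real.exp (-p.1) - Real.exp (-p.2)) * (φ p.1 - φ p.2))
      (Set.Ici (0:ℝ) ×ˢ Set.Ici (0:ℝ)) ∧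
    B 0 0 / ((0:ℝ) * 0) * (Real.exp (-(0:ℝ)) - Real.exp (-(0:ℝ))) * (φ 0 - φ 0) = 0 := by
  refine ⟨?_, by simp⟩
  rintro ⟨a, b⟩ hab
  change ContinuousWithinAt (kernel B φ) _ (a, b)
  by_cases h₀ : a = 0 ∧ b = 0
  · obtain ⟨rfl, rfl⟩ := h₀
    exact continuousWithinAt_kernel_zero hδ hC hBnn hBsupp hBbound hφ hφ0
  by_cases haxis : a * b = 0
  · exact (continuousAt_kernel_of_mul_eq_zero hθ.1 hBsupp haxis
      (not_and_or.1 h₀)).continuousWithinAt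
  have ha : 0 < a := lt_of_le_of_ne hab.1 (left_ne_zero_of_mul haxis).symm
  have hb : 0 < b := lt_of_le_of_ne hab.2 (right_ne_zero_of_mul haxis).symm
  exact continuousWithinAt_kernel_of_pos ha hb
    (continuousWithinAt_sdiff_singleton.1 (hBcont (a, b) ⟨hab, by simp [ha.ne']⟩)) hφ.continuous
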